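/- arXiv:2206.09050 — 6 statements merged into one kernel-verified Lean document; each statement's English description precedes it below -/
import Mathlib

section
/- Fix an integer n ≥ 1 and an integer N ≥ n + 1. Let β_1, …, β_N be distinct positive real numbers. Then there exist distinct positive real numbers β̃_1, …, β̃_N such that Σ_{m=1}^{N} β̃_m^{2k+1} = Σ_{m=1}^{N} β_m^{2k+1} for every k = 1, …, n, but (−1)^n Σ_{m=1}^{N} β̃_m^{2n+3} < (−1)^n Σ_{m=1}^{N} β_m^{2n+3}. -/
/-!
The map `x ↦ (p_1(x), …, p_{n+1}(x))` on `ℝ^N` has Jacobian rows `((2k+3) x_m^(2k+2))_m`.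
Restricted to any `n + 1` columns this matrix is a diagonal matrix times the (transposed)
Vandermonde matrix of the `x_m²` times a diagonal matrix, so at distinct positive `β` the
Jacobian is surjective. By the surjective inverse function theorem the map is then open at `β`:
the values `(p_1, …, p_n, p_{n+1} - (-1)^n t)` for small `t > 0` are attained at points close to
`β`, and points close to `β` are still distinct and positive.
-/

open Filter Topology Matrix Function

theorem isOpen_setOf_injective {ι X : Type*} [Finite ι] [TopologicalSpace X] [T2Space X] :
    IsOpen {x : ι → X | Injective x} := by
  refine isOpen_iff_mem_nhds.2 fun x hx => ?_
  have : ∀ᶠ y in 𝓝 x, ∀ i j, i ≠ j → y i ≠ y j := by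
    simp only [eventually_all]
    exact fun i j hij =>
      (isOpen_ne_fun (continuous_apply i) (continuous_apply j)).mem_nhds (hx.ne hij)
  exact this.mono fun y hy i j => not_imp_not.1 (hy i j)

section OddPowerSums

variable {ι : Type*} [Fintype ι] (n : ℕ)

/-- Component `k` is the odd power sum `p_{k+1}(x) = ∑ x_m ^ (2k+3)`. -/
def oddPowerSums (x : ι → ℝ) : Fin (n + 1) → ℝ :=
  fun k => ∑ m, x m ^ (2 * (k : ℕ) + 3)

def oddPowerSumsJacobian (x : ι → ℝ) : Matrix (Fin (n + 1)) ι ℝ :=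
  of fun k m => (2 * (k : ℕ) + 3 : ℕ) * x m ^ (2 * (k : ℕ) + 2)

theorem hasStrictFDerivAt_oddPowerSums (x : ι → ℝ) :
    HasStrictFDerivAt (oddPowerSums n)
      (oddPowerSumsJacobian n x).mulVecLin.toContinuousLinearMap x := by
  rw [hasStrictFDerivAt_pi']
  intro k
  have hpow : ∀ m : ι, HasStrictFDerivAt (fun y : ι → ℝ => y m ^ (2 * (k : ℕ) + 3))
      (((2 * (k : ℕ) + 3 : ℕ) * x m ^ (2 * (k : ℕ) + 2) : ℝ) • ContinuousLinearMap.proj m) x :=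
    fun m => by
      simpa [Function.comp_def] using
        (hasStrictDerivAt_pow (2 * (k : ℕ) + 3) (x m)).comp_hasStrictFDerivAt x
          (hasStrictFDerivAt_apply (𝕜 := ℝ) m x)
  convert HasStrictFDerivAt.fun_sum (u := Finset.univ) fun m _ => hpow m using 1
  · ext y
    simp [oddPowerSums]
  · ext v
    simp [oddPowerSumsJacobian, mulVec, dotProduct, mul_comm]

theorem det_oddPowerSumsJacobian_ne_zero {x : Fin (n + 1) → ℝ} (hx : Injective x)
    (hpos : ∀ j, 0 < x j) : (oddPowerSumsJacobian n x).det ≠ 0 := by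
  have hfactor : oddPowerSumsJacobian n x =
      diagonal (fun k : Fin (n + 1) => ((2 * (k : ℕ) + 3 : ℕ) : ℝ)) *
        (vandermonde (x ^ 2))ᵀ * diagonal (x ^ 2) := by
    ext k j
    simp [oddPowerSumsJacobian, diagonal_mul, mul_diagonal, vandermonde_apply, ← pow_mul]
    ring
  have hsq : Injective (x ^ 2) := fun i j h =>
    hx <| (pow_left_inj₀ (hpos i).le (hpos j).le two_ne_zero).1 (by simpa using h)
  rw [hfactor, det_mul, det_mul, det_diagonal, det_transpose, det_diagonal]
  refine mul_ne_zero (mul_ne_zero ?_ (det_vandermonde_ne_zero_iff.2 hsq)) ?_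
  · exact Finset.prod_ne_zero_iff.2 fun k _ => by positivity
  · exact Finset.prod_ne_zero_iff.2 fun j _ => pow_ne_zero 2 (hpos j).ne'

theorem oddPowerSumsJacobian_mulVec_surjective {x : ι → ℝ} (hx : Injective x)
    (hpos : ∀ m, 0 < x m) (hcard : n + 1 ≤ Fintype.card ι) :
    Surjective (oddPowerSumsJacobian n x).mulVec := by
  classical
  obtain ⟨e⟩ : Nonempty (Fin (n + 1) ↪ ι) :=
    Embedding.nonempty_of_card_le (by simpa using hcard)
  have hdet := det_oddPowerSumsJacobian_ne_zero n (hx.comp e.injective) (fun j => hpos (e j))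
  rw [mulVec_surjective_iff_exists_right_inverse]
  refine ⟨(1 : Matrix ι ι ℝ).submatrix (Equiv.refl ι) e * (oddPowerSumsJacobian n (x ∘ e))⁻¹, ?_⟩
  rw [← Matrix.mul_assoc, mul_submatrix_one]
  exact mul_nonsing_inv _ (isUnit_iff_ne_zero.2 hdet)

theorem map_oddPowerSums_nhds {x : ι → ℝ} (hx : Injective x) (hpos : ∀ m, 0 < x m)
    (hcard : n + 1 ≤ Fintype.card ι) : map (oddPowerSums n) (𝓝 x) = 𝓝 (oddPowerSums n x) :=
  (hasStrictFDerivAt_oddPowerSums n x).map_nhds_eq_of_surj <|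
    LinearMap.range_eq_top.2 (oddPowerSumsJacobian_mulVec_surjective n hx hpos hcard)

end OddPowerSums

theorem stmt_2_general (n N : ℕ) (hN : n + 1 ≤ N)
    (β : Fin N → ℝ) (hinj : Function.Injective β) (hpos : ∀ m, 0 < β m) :
    ∃ β' : Fin N → ℝ, Function.Injective β' ∧ (∀ m, 0 < β' m) ∧
      (∀ k : ℕ, 1 ≤ k → k ≤ n →
        ∑ m, β' m ^ (2 * k + 1) = ∑ m, β m ^ (2 * k + 1)) ∧
      (-1 : ℝ) ^ n * ∑ m, β' m ^ (2 * n + 3) <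
        (-1 : ℝ) ^ n * ∑ m, β m ^ (2 * n + 3) := by
  set p := oddPowerSums n β
  have himage : oddPowerSums n '' {x : Fin N → ℝ | Injective x ∧ ∀ m, 0 < x m} ∈ 𝓝 p := by
    rw [← map_oddPowerSums_nhds n hinj hpos (by simpa using hN)]
    refine image_mem_map (inter_mem (isOpen_setOf_injective.mem_nhds hinj) ?_)
    exact eventually_all.2 fun m => ((continuous_apply m).tendsto β).eventually_const_lt (hpos m)
  let target : ℝ → Fin (n + 1) → ℝ :=
    fun t => update p (Fin.last n) (p (Fin.last n) - (-1) ^ n * t)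
  have htarget : Tendsto target (𝓝[>] 0) (𝓝 p) := by
    have : Continuous target := continuous_const.update _ (by fun_prop)
    simpa [target] using (this.tendsto 0).mono_left nhdsWithin_le_nhds
  obtain ⟨t, ⟨β', ⟨hinj', hpos'⟩, hβ'⟩, ht⟩ :=
    ((htarget.eventually himage).and self_mem_nhdsWithin).exists
  refine ⟨β', hinj', hpos', fun k hk hkn => ?_, ?_⟩
  · obtain ⟨j, rfl⟩ : ∃ j, k = j + 1 := ⟨k - 1, by omega⟩
    have h : oddPowerSums n β' ⟨j, by omega⟩ = p ⟨j, by omega⟩ := by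
      rw [hβ']
      exact update_of_ne (Fin.ne_of_val_ne (by simp; omega)) _ _
    exact h
  · have h : ∑ m, β' m ^ (2 * n + 3) = ∑ m, β m ^ (2 * n + 3) - (-1) ^ n * t := by
      simpa [target, p, oddPowerSums] using congrFun hβ' (Fin.last n)
    rw [h, mul_sub, ← mul_assoc, ← mul_pow]
    norm_num [ht]

/-- **Decreasing the `(n+1)`st odd power sum while preserving the first `n`.**
Fix `n ≥ 1` and `N ≥ n + 1`.  Given distinct positive reals `β_1, …, β_N`, there exist
distinct positive reals `β̃_1, …, β̃_N` with the same odd power sums `∑ β_m ^ (2k+1)` for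
`k = 1, …, n`, but with `(-1)^n ∑ β̃_m ^ (2n+3) < (-1)^n ∑ β_m ^ (2n+3)`. -/
theorem stmt_2 (n N : ℕ) (hn : 1 ≤ n) (hN : n + 1 ≤ N)
    (β : Fin N → ℝ) (hinj : Function.Injective β) (hpos : ∀ m, 0 < β m) :
    ∃ β' : Fin N → ℝ, Function.Injective β' ∧ (∀ m, 0 < β' m) ∧
      (∀ k : ℕ, 1 ≤ k → k ≤ n →
        ∑ m, β' m ^ (2 * k + 1) = ∑ m, β m ^ (2 * k + 1)) ∧
      (-1 : ℝ) ^ n * ∑ m, β' m ^ (2 * n + 3) <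
        (-1 : ℝ) ^ n * ∑ m, β m ^ (2 * n + 3) :=
  stmt_2_general n N hN β hinj hpos
end

section
/- Fix an integer n ≥ 1. Let S ⊂ ℝ^n denote the half-open simplex of all β = (β_1, …, β_n) for which there exists an integer N with 0 ≤ N ≤ n such that β_1 > β_2 > ⋯ > β_N > 0 and β_{N+1} = ⋯ = β_n = 0. Define Φ : S → ℝ^n by Φ(β)_m = (−1)^{m+1} (2^{2m+1}/(2m+1)) Σ_{j=1}^{n} β_j^{2m+1} for m = 1, …, n. Then Φ is a homeomorphism from S (with the subspace topology from ℝ^n) onto its image Φ(S) (with the subspace topology from ℝ^n). -/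
/-!
`Φ` is continuous and, on the closed cone of nonincreasing nonnegative vectors (which contains
`S`), injective and proper; so it is a closed embedding of that cone, and hence an embedding of `S`.

Injectivity is a Descartes rule of signs. If `x ≠ y` have the same power sums of orders
`3, 5, …, 2n + 1`, the integer-valued difference `F u = #{i | u ≤ xᵢ} - #{i | u ≤ yᵢ}` has total
variation at most `2n`, so it changes sign fewer than `n` times, say at `z₁, …, z_r`. The odd
polynomial `Q = ∑_{m<n} c_m t^(2m+3)` with `Q' = ± t² ∏ (t² - z_k²)` then has increments of the
sign of `F` between consecutive atoms, so by Abel summation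
`∑ Q(xᵢ) - ∑ Q(yᵢ) = ∑ⱼ F(uⱼ) (Q(uⱼ) - Q(uⱼ₊₁)) > 0`, whereas the power sums force it to vanish.
-/

/-- The half-open simplex of multisoliton parameters: `β ∈ ℝⁿ` such that for some
`0 ≤ N ≤ n`, `β_1 > β_2 > ⋯ > β_N > 0` and `β_{N+1} = ⋯ = β_n = 0`. -/
def simplexS (n : ℕ) : Set (Fin n → ℝ) :=
  {β | ∃ N ≤ n, (∀ i : Fin n, (i : ℕ) < N → 0 < β i) ∧
    (∀ i j : Fin n, i < j → (j : ℕ) < N → β j < β i) ∧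
    (∀ i : Fin n, N ≤ (i : ℕ) → β i = 0)}

/-- `Φ(β)_m = (-1)^{m+1} (2^{2m+1}/(2m+1)) ∑_j β_j^{2m+1}` for `m = 1, …, n`
(here the index `m : Fin n` corresponds to the mathematical index `m + 1`). -/
noncomputable def PhiMap (n : ℕ) (β : Fin n → ℝ) : Fin n → ℝ :=
  fun m => (-1 : ℝ) ^ (m : ℕ) * 2 ^ (2 * (m : ℕ) + 3) / (2 * (m : ℕ) + 3 : ℝ) *
    ∑ j, β j ^ (2 * (m : ℕ) + 3)

namespace OddPowerSum

/-- `abelSum Q F [u₁, …, uₖ] = ∑ⱼ F uⱼ * (Q uⱼ - Q uⱼ₊₁)` with `uₖ₊₁ = 0`. -/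
noncomputable def abelSum (Q F : ℝ → ℝ) : List ℝ → ℝ
  | [] => 0
  | u :: l => F u * (Q u - Q (l.headD 0)) + abelSum Q F l

section AbelSum

variable {Q F G : ℝ → ℝ} {l : List ℝ}

theorem abelSum_congr (h : ∀ u ∈ l, F u = G u) : abelSum Q F l = abelSum Q G l := by
  induction l with
  | nil => rfl
  | cons u l ih =>
    simp only [abelSum, h u List.mem_cons_self, ih fun v hv => h v (List.mem_cons_of_mem u hv)]

theorem abelSum_zero : abelSum Q 0 l = 0 := by
  induction l with
  | nil => rfl
  | cons u l ih => simp [abelSum, ih]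

theorem abelSum_add : abelSum Q (F + G) l = abelSum Q F l + abelSum Q G l := by
  induction l with
  | nil => simp [abelSum]
  | cons u l ih => simp only [abelSum, ih, Pi.add_apply]; ring

theorem abelSum_sub : abelSum Q (F - G) l = abelSum Q F l - abelSum Q G l := by
  induction l with
  | nil => simp [abelSum]
  | cons u l ih => simp only [abelSum, ih, Pi.sub_apply]; ring

theorem abelSum_one : abelSum Q 1 l = Q (l.headD 0) - Q 0 := by
  induction l with
  | nil => simp [abelSum]
  | cons u l ih => simp only [abelSum, ih, Pi.one_apply, List.headD_cons]; ring

theorem headD_nonneg (hl0 : ∀ u ∈ l, 0 < u) : 0 ≤ l.headD 0 := by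
  cases l with
  | nil => rfl
  | cons u l => exact (hl0 u List.mem_cons_self).le

theorem le_headD (hl : l.Pairwise (· > ·)) {v : ℝ} (hv : v ∈ l) : v ≤ l.headD 0 := by
  cases l with
  | nil => cases hv
  | cons u l =>
    rcases List.mem_cons.1 hv with rfl | hv
    · exact le_rfl
    · exact (List.rel_of_pairwise_cons hl hv).le

theorem abelSum_indicator (hQ : Q 0 = 0) (hl : l.Pairwise (· > ·)) (hl0 : ∀ u ∈ l, 0 < u)
    {a : ℝ} (ha : 0 ≤ a) (hal : 0 < a → a ∈ l) :
    abelSum Q (fun u => if u ≤ a then 1 else 0) l = Q a := by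
  induction l with
  | nil =>
    obtain rfl : a = 0 := (ha.eq_or_lt.resolve_right fun h => by simpa using hal h).symm
    simp [abelSum, hQ]
  | cons u l ih =>
    have hlu : ∀ v ∈ l, v < u := fun v hv => List.rel_of_pairwise_cons hl hv
    rcases lt_trichotomy a u with hau | rfl | hua
    · have hal' : 0 < a → a ∈ l := fun h => (List.mem_cons.1 (hal h)).resolve_left hau.ne
      simp [abelSum, not_le.2 hau, ih hl.of_cons (List.forall_mem_cons.1 hl0).2 hal']
    · have hone : abelSum Q (fun u => if u ≤ a then 1 else 0) l = abelSum Q 1 l :=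
        abelSum_congr fun v hv => if_pos (hlu v hv).le
      simp [abelSum, hone, abelSum_one, hQ]
    · obtain hal | hal := List.mem_cons.1 (hal ((hl0 u List.mem_cons_self).trans hua))
      · exact absurd hal hua.ne'
      · exact absurd (hlu a hal) (lt_asymm hua)

theorem abelSum_countP (hQ : Q 0 = 0) (hl : l.Pairwise (· > ·)) (hl0 : ∀ u ∈ l, 0 < u)
    {s : Multiset ℝ} (hs : ∀ a ∈ s, 0 ≤ a) (hsl : ∀ a ∈ s, 0 < a → a ∈ l) :
    abelSum Q (fun u => (s.countP (u ≤ ·) : ℝ)) l = (s.map Q).sum := by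
  induction s using Multiset.induction_on with
  | empty =>
    simp only [Multiset.countP_zero, CharP.cast_eq_zero, Multiset.map_zero, Multiset.sum_zero]
    exact abelSum_zero
  | cons a s ih =>
    have hsplit : (fun u => ((a ::ₘ s).countP (u ≤ ·) : ℝ)) =
        (fun u => (s.countP (u ≤ ·) : ℝ)) + fun u => if u ≤ a then 1 else 0 := by
      ext u; simp [Multiset.countP_cons]
    rw [hsplit, abelSum_add, ih (fun b hb => hs b (Multiset.mem_cons_of_mem hb))
      (fun b hb => hsl b (Multiset.mem_cons_of_mem hb)),
      abelSum_indicator hQ hl hl0 (hs a (Multiset.mem_cons_self a s))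
        (hsl a (Multiset.mem_cons_self a s))]
    simp [add_comm]

/-- On each gap `(v, u)` between a point `u` of `l` and the next point `v` below it (or `0`),
`q` has the sign of `F u`. -/
def IsSignAdapted (F q : ℝ → ℝ) (l : List ℝ) : Prop :=
  ∀ u ∈ l, F u ≠ 0 → ∀ t ∈ Set.Ioo 0 u, (∀ v ∈ l, v < t ∨ u ≤ v) → 0 < F u * q t

theorem IsSignAdapted.mul_left {q g : ℝ → ℝ} (h : IsSignAdapted F q l)
    (hg : ∀ t, 0 < t → 0 < g t) : IsSignAdapted F (fun t => g t * q t) l := by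
  intro u hu hFu t ht hgap
  have := h u hu hFu t ht hgap
  have := hg t ht.1
  calc 0 < g t * (F u * q t) := by positivity
    _ = F u * (g t * q t) := by ring

theorem mul_sub_pos_of_hasDerivAt {q : ℝ → ℝ} (hQ : ∀ t, HasDerivAt Q (q t) t) {c b u : ℝ}
    (hbu : b < u) (h : ∀ t ∈ Set.Ioo b u, 0 < c * q t) : 0 < c * (Q u - Q b) := by
  obtain ⟨ξ, hξ, hslope⟩ := exists_hasDerivAt_eq_slope Q q hbu
    (fun t _ => (hQ t).continuousAt.continuousWithinAt) fun t _ => hQ t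
  have hub : 0 < u - b := sub_pos.2 hbu
  calc 0 < c * q ξ * (u - b) := mul_pos (h ξ hξ) hub
    _ = c * (Q u - Q b) := by rw [hslope]; field_simp

theorem abelSum_cons_term_pos {q : ℝ → ℝ} (hQ : ∀ t, HasDerivAt Q (q t) t) {u : ℝ}
    (hl : (u :: l).Pairwise (· > ·)) (hl0 : ∀ v ∈ u :: l, 0 < v)
    (hF : IsSignAdapted F q (u :: l)) (hFu : F u ≠ 0) :
    0 < F u * (Q u - Q (l.headD 0)) := by
  have hlu : ∀ v ∈ l, v < u := fun v hv => List.rel_of_pairwise_cons hl hv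
  have hb0 : 0 ≤ l.headD 0 := headD_nonneg (List.forall_mem_cons.1 hl0).2
  have hbu : l.headD 0 < u := by
    cases l with
    | nil => exact hl0 u List.mem_cons_self
    | cons v l => exact hlu v List.mem_cons_self
  refine mul_sub_pos_of_hasDerivAt hQ hbu fun t ht => hF u List.mem_cons_self hFu t
    ⟨hb0.trans_lt ht.1, ht.2⟩ fun v hv => ?_
  rcases List.mem_cons.1 hv with rfl | hv
  · exact Or.inr le_rfl
  · exact Or.inl ((le_headD hl.of_cons hv).trans_lt ht.1)

theorem IsSignAdapted.of_cons {q : ℝ → ℝ} {u : ℝ} (h : IsSignAdapted F q (u :: l))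
    (hl : (u :: l).Pairwise (· > ·)) : IsSignAdapted F q l := by
  intro v hv hFv t ht hgap
  refine h v (List.mem_cons_of_mem u hv) hFv t ht fun w hw => ?_
  rcases List.mem_cons.1 hw with rfl | hw
  · exact Or.inr (List.rel_of_pairwise_cons hl hv).le
  · exact hgap w hw

theorem abelSum_nonneg {q : ℝ → ℝ} (hQ : ∀ t, HasDerivAt Q (q t) t) (hl : l.Pairwise (· > ·))
    (hl0 : ∀ u ∈ l, 0 < u) (hF : IsSignAdapted F q l) : 0 ≤ abelSum Q F l := by
  induction l with
  | nil => exact le_rfl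
  | cons u l ih =>
    have hterm : 0 ≤ F u * (Q u - Q (l.headD 0)) := by
      by_cases hFu : F u = 0
      · simp [hFu]
      · exact (abelSum_cons_term_pos hQ hl hl0 hF hFu).le
    exact add_nonneg hterm (ih hl.of_cons ((List.forall_mem_cons.1 hl0).2) (hF.of_cons hl))

theorem abelSum_pos {q : ℝ → ℝ} (hQ : ∀ t, HasDerivAt Q (q t) t) (hl : l.Pairwise (· > ·))
    (hl0 : ∀ u ∈ l, 0 < u) (hF : IsSignAdapted F q l) (hne : ∃ u ∈ l, F u ≠ 0) :
    0 < abelSum Q F l := by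
  induction l with
  | nil => simp at hne
  | cons u l ih =>
    have hl0' : ∀ v ∈ l, 0 < v := (List.forall_mem_cons.1 hl0).2
    by_cases hFu : F u = 0
    · have hne' := ((List.exists_mem_cons_iff _ _ _).1 hne).resolve_left (not_not.2 hFu)
      simpa [abelSum, hFu] using ih hl.of_cons hl0' (hF.of_cons hl) hne'
    · exact add_pos_of_pos_of_nonneg (abelSum_cons_term_pos hQ hl hl0 hF hFu)
        (abelSum_nonneg hQ hl.of_cons hl0' (hF.of_cons hl))

end AbelSum

section SignChanges

variable (F : ℝ → ℤ)

/-- The points of `l` where the sign of `F` flips; `c` is the sign of the last nonzero value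
seen. -/
def signChanges : ℤ → List ℝ → List ℝ
  | _, [] => []
  | c, u :: l => if F u * c < 0 then u :: signChanges (-c) l else signChanges c l

def firstSign : List ℝ → ℤ
  | [] => 1
  | u :: l => if F u = 0 then firstSign l else (F u).sign

def variation : ℤ → List ℝ → ℤ
  | _, [] => 0
  | p, u :: l => |F u - p| + variation (F u) l

variable {F}

theorem signChanges_sublist (c : ℤ) (l : List ℝ) : (signChanges F c l).Sublist l := by
  induction l generalizing c with
  | nil => exact List.Sublist.slnil
  | cons u l ih =>
    unfold signChanges
    split_ifs
    · exact (ih (-c)).cons_cons u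
    · exact (ih c).cons u

theorem sign_eq_one_or_neg_one {z : ℤ} (hz : z ≠ 0) : z.sign = 1 ∨ z.sign = -1 := by
  rcases Int.sign_trichotomy z with h | h | h <;> simp_all

theorem firstSign_eq_one_or_neg_one (l : List ℝ) : firstSign F l = 1 ∨ firstSign F l = -1 := by
  induction l with
  | nil => exact Or.inl rfl
  | cons u l ih =>
    unfold firstSign
    split_ifs with hu
    · exact ih
    · exact sign_eq_one_or_neg_one hu

/-- Each sign change costs at least `2` in variation; `max 0 (1 - c * p)` is the distance
from the starting value `p` to the values of sign `c`. -/
theorem two_mul_length_signChanges_le {c : ℤ} (hc : c = 1 ∨ c = -1) (p : ℤ) (l : List ℝ) :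
    2 * ((signChanges F c l).length : ℤ) ≤ variation F p l + max 0 (1 - c * p) := by
  induction l generalizing c p with
  | nil => simp [signChanges, variation]
  | cons u l ih =>
    have hc' : -c = 1 ∨ -c = -1 := by omega
    have habs := neg_abs_le (F u - p)
    have habs' := le_abs_self (F u - p)
    unfold signChanges variation
    split_ifs with hflip
    · have := ih hc' (F u)
      simp only [List.length_cons, Nat.cast_add, Nat.cast_one]
      rcases hc with rfl | rfl <;> simp only [mul_one, mul_neg, neg_neg] at hflip this ⊢ <;>
        omega
    · have := ih hc (F u)
      rcases hc with rfl | rfl <;> simp only [mul_one, mul_neg] at hflip this ⊢ <;>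
        omega

theorem two_mul_length_signChanges_firstSign_lt {l : List ℝ} (hne : ∃ u ∈ l, F u ≠ 0) :
    2 * ((signChanges F (firstSign F l) l).length : ℤ) < variation F 0 l := by
  induction l with
  | nil => simp at hne
  | cons u l ih =>
    by_cases hFu : F u = 0
    · have hne' := ((List.exists_mem_cons_iff _ _ _).1 hne).resolve_left (not_not.2 hFu)
      simpa [signChanges, firstSign, variation, hFu] using ih hne'
    · have hbound := two_mul_length_signChanges_le (F := F) (sign_eq_one_or_neg_one hFu) (F u) l
      have habs := Int.one_le_abs hFu
      rw [mul_comm, Int.sign_mul_self_eq_abs] at hbound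
      have hnoflip : ¬ F u * (F u).sign < 0 := by rw [mul_comm, Int.sign_mul_self_eq_abs]; omega
      simp only [firstSign, signChanges, variation, hFu, hnoflip, if_false, sub_zero]
      omega

theorem variation_le {W : ℝ → ℤ} (hFW : ∀ u v, u ≤ v → |F u - F v| ≤ W u - W v) {l : List ℝ}
    (hl : l.Pairwise (· > ·)) {a b : ℝ} (hba : b ≤ a) (hla : ∀ u ∈ l, u ≤ a)
    (hbl : ∀ u ∈ l, b ≤ u) : variation F (F a) l ≤ W b - W a := by
  induction l generalizing a with
  | nil => simpa [variation] using (abs_nonneg _).trans (hFW b a hba)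
  | cons u l ih =>
    have hu := hFW u a (hla u List.mem_cons_self)
    have := ih hl.of_cons (hbl u List.mem_cons_self)
      (fun v hv => (List.rel_of_pairwise_cons hl hv).le)
      (fun v hv => hbl v (List.mem_cons_of_mem u hv))
    simp only [variation]
    linarith

theorem isSignAdapted_signChanges {l : List ℝ} (hl : l.Pairwise (· > ·)) (hl0 : ∀ u ∈ l, 0 < u)
    {c : ℤ} (hc : c = 1 ∨ c = -1) :
    IsSignAdapted (fun u => (F u : ℝ))
      (fun t => c * ((signChanges F c l).map fun z => t ^ 2 - z ^ 2).prod) l := by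
  induction l generalizing c with
  | nil => intro u hu; cases hu
  | cons u₀ l ih =>
    have hc' : -c = 1 ∨ -c = -1 := by omega
    have hl0' : ∀ v ∈ l, 0 < v := (List.forall_mem_cons.1 hl0).2
    have hlu₀ : ∀ v ∈ l, v < u₀ := fun v hv => List.rel_of_pairwise_cons hl hv
    intro u hu hFu t ht hgap
    simp only [ne_eq, Int.cast_eq_zero] at hFu ⊢
    have hgap' : ∀ v ∈ l, v < t ∨ u ≤ v := fun v hv => hgap v (List.mem_cons_of_mem u₀ hv)
    rcases List.mem_cons.1 hu with rfl | hu
    · have hprod : ∀ c', 0 < ((signChanges F c' l).map fun z => t ^ 2 - z ^ 2).prod := by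
        intro c'
        refine List.prod_pos fun x hx => ?_
        obtain ⟨z, hz, rfl⟩ := List.mem_map.1 hx
        have hzl := (signChanges_sublist c' l).subset hz
        have hzt : z < t := (hgap' z hzl).resolve_right (hlu₀ z hzl).not_ge
        nlinarith [hl0' z hzl]
      unfold signChanges
      split_ifs with hflip
      · have hsign : (0 : ℝ) < F u * c * (t ^ 2 - u ^ 2) :=
          mul_pos_of_neg_of_neg (by exact_mod_cast hflip) (by nlinarith [ht.1, ht.2])
        refine (mul_pos hsign (hprod (-c))).trans_eq ?_
        simp only [List.map_cons, List.prod_cons]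
        ring
      · have hsign : 0 < F u * c :=
          lt_of_le_of_ne (not_lt.1 hflip) (mul_ne_zero hFu (by omega)).symm
        refine (mul_pos (Int.cast_pos.2 hsign : (0 : ℝ) < _) (hprod c)).trans_eq ?_
        push_cast
        ring
    · unfold signChanges
      split_ifs with hflip
      · have hsign : 0 < u₀ ^ 2 - t ^ 2 := by nlinarith [ht.1, ht.2, hlu₀ u hu]
        refine (mul_pos (ih hl.of_cons hl0' hc' u hu (by simpa using hFu) t ht hgap')
          hsign).trans_eq ?_
        simp only [List.map_cons, List.prod_cons]
        push_cast
        ring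
      · exact ih hl.of_cons hl0' hc u hu (by simpa using hFu) t ht hgap'

end SignChanges

noncomputable def oddPoly (n : ℕ) (c : ℕ → ℝ) (t : ℝ) : ℝ :=
  ∑ m ∈ Finset.range n, c m * t ^ (2 * m + 3)

theorem oddPoly_zero (n : ℕ) (c : ℕ → ℝ) : oddPoly n c 0 = 0 := by
  simp [oddPoly]

theorem sum_map_oddPoly (n : ℕ) (c : ℕ → ℝ) (s : Multiset ℝ) :
    (s.map (oddPoly n c)).sum = ∑ m ∈ Finset.range n, c m * (s.map (· ^ (2 * m + 3))).sum := by
  induction s using Multiset.induction_on with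
  | empty => simp
  | cons a s ih => simp [ih, oddPoly, Finset.sum_add_distrib, mul_add]

theorem exists_hasDerivAt_oddPoly {P : Polynomial ℝ} {n : ℕ} (hP : P.natDegree < n) :
    ∃ c, ∀ t, HasDerivAt (oddPoly n c) (t ^ 2 * P.eval (t ^ 2)) t := by
  refine ⟨fun m => P.coeff m / (2 * m + 3), fun t => ?_⟩
  have hderiv := HasDerivAt.fun_sum (u := Finset.range n) fun m _ =>
    (hasDerivAt_pow (2 * m + 3) t).const_mul (P.coeff m / (2 * m + 3))
  refine hderiv.congr_deriv ?_
  rw [Polynomial.eval_eq_sum_range' hP, Finset.mul_sum]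
  refine Finset.sum_congr rfl fun m _ => ?_
  have : (2 * m + 3 : ℝ) ≠ 0 := by positivity
  rw [show 2 * m + 3 - 1 = 2 * m + 2 from rfl, pow_add, pow_mul]
  field_simp
  push_cast
  ring

theorem exists_abelSum_oddPoly_pos {F : ℝ → ℤ} {l : List ℝ} (hl : l.Pairwise (· > ·))
    (hl0 : ∀ u ∈ l, 0 < u) (hne : ∃ u ∈ l, F u ≠ 0) {n : ℕ} (hvar : variation F 0 l ≤ 2 * n) :
    ∃ c, 0 < abelSum (oddPoly n c) (fun u => (F u : ℝ)) l := by
  have hZ : (signChanges F (firstSign F l) l).length < n := by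
    have := two_mul_length_signChanges_firstSign_lt hne
    omega
  set ε := firstSign F l
  set Z := signChanges F ε l
  set P : Polynomial ℝ :=
    Polynomial.C (ε : ℝ) *
      ((Z.map (· ^ 2) : Multiset ℝ).map fun a => Polynomial.X - Polynomial.C a).prod
  have hP : P.natDegree < n :=
    (Polynomial.natDegree_C_mul_le _ _).trans_lt <| by
      rwa [Polynomial.natDegree_multiset_prod_X_sub_C_eq_card, Multiset.coe_card, List.length_map]
  have hPeval : ∀ t, P.eval (t ^ 2) = ε * (Z.map fun z => t ^ 2 - z ^ 2).prod := by
    intro t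
    simp [P, Polynomial.eval_list_prod, Function.comp_def]
  obtain ⟨c, hc⟩ := exists_hasDerivAt_oddPoly hP
  refine ⟨c, abelSum_pos hc hl hl0 ?_ (by simpa using hne)⟩
  simp only [hPeval]
  exact (isSignAdapted_signChanges hl hl0 (firstSign_eq_one_or_neg_one l)).mul_left
    fun t ht => by positivity

theorem antitone_countP_le {α : Type*} [LinearOrder α] (s : Multiset α) :
    Antitone fun u => s.countP (u ≤ ·) := fun _ _ huv => by
  simp only [Multiset.countP_eq_card_filter]
  exact Multiset.card_le_card (Multiset.monotone_filter_right s fun _ h => huv.trans h)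

theorem variation_countP_sub_le {s t : Multiset ℝ} (hs : ∀ a ∈ s, 0 ≤ a) (ht : ∀ a ∈ t, 0 ≤ a)
    {l : List ℝ} (hl : l.Pairwise (· > ·)) (hl0 : ∀ u ∈ l, 0 ≤ u) (hlst : ∀ u ∈ l, u ∈ s + t) :
    variation (fun v => (s.countP (v ≤ ·) : ℤ) - t.countP (v ≤ ·)) 0 l ≤
      Multiset.card s + Multiset.card t := by
  obtain ⟨M, hM⟩ := (s + t).toFinset.bddAbove
  set a := max 0 M + 1
  have hlt : ∀ v ∈ s + t, v < a := fun v hv =>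
    ((hM (Multiset.mem_toFinset.2 hv)).trans (le_max_right 0 M)).trans_lt (lt_add_one _)
  have hs_top : s.countP (a ≤ ·) = 0 :=
    Multiset.countP_eq_zero.2 fun v hv => not_le.2 (hlt v (Multiset.mem_add.2 (Or.inl hv)))
  have ht_top : t.countP (a ≤ ·) = 0 :=
    Multiset.countP_eq_zero.2 fun v hv => not_le.2 (hlt v (Multiset.mem_add.2 (Or.inr hv)))
  have hbound := variation_le
    (F := fun v => (s.countP (v ≤ ·) : ℤ) - t.countP (v ≤ ·))
    (W := fun v => (s.countP (v ≤ ·) : ℤ) + t.countP (v ≤ ·))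
    (fun u v huv => by
      have : s.countP (v ≤ ·) ≤ s.countP (u ≤ ·) := antitone_countP_le s huv
      have : t.countP (v ≤ ·) ≤ t.countP (u ≤ ·) := antitone_countP_le t huv
      rw [abs_le]; constructor <;> omega)
    hl (by positivity) (fun u hu => (hlt u (hlst u hu)).le) hl0
  simpa [hs_top, ht_top, Multiset.countP_eq_card.2 hs, Multiset.countP_eq_card.2 ht] using hbound

theorem countP_le_eq_of_sum_map_pow_eq {n : ℕ} {s t : Multiset ℝ} (hs : ∀ a ∈ s, 0 ≤ a)
    (ht : ∀ a ∈ t, 0 ≤ a) (hsn : Multiset.card s ≤ n) (htn : Multiset.card t ≤ n)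
    (h : ∀ m < n, (s.map (· ^ (2 * m + 3))).sum = (t.map (· ^ (2 * m + 3))).sum)
    {u : ℝ} (hu : u ∈ s + t) (hu0 : 0 < u) : s.countP (u ≤ ·) = t.countP (u ≤ ·) := by
  by_contra hne
  set l := ((s + t).toFinset.filter (0 < ·)).sort (· ≥ ·)
  have hl : l.Pairwise (· > ·) := (Finset.sortedGT_sort _).pairwise
  have hmem : ∀ v, v ∈ l ↔ v ∈ s + t ∧ 0 < v := by simp [l]
  have hl0 : ∀ v ∈ l, 0 < v := fun v hv => ((hmem v).1 hv).2
  have hvar := variation_countP_sub_le hs ht hl (fun v hv => (hl0 v hv).le)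
    fun v hv => ((hmem v).1 hv).1
  obtain ⟨c, hpos⟩ := exists_abelSum_oddPoly_pos (n := n) hl hl0
    (F := fun v => (s.countP (v ≤ ·) : ℤ) - t.countP (v ≤ ·))
    ⟨u, (hmem u).2 ⟨hu, hu0⟩, by simpa [sub_eq_zero] using hne⟩ (by omega)
  have hsl : ∀ a ∈ s, 0 < a → a ∈ l := fun a ha ha0 =>
    (hmem a).2 ⟨Multiset.mem_add.2 (.inl ha), ha0⟩
  have htl : ∀ a ∈ t, 0 < a → a ∈ l := fun a ha ha0 =>
    (hmem a).2 ⟨Multiset.mem_add.2 (.inr ha), ha0⟩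
  have hzero : abelSum (oddPoly n c)
      (fun v => ((s.countP (v ≤ ·) : ℤ) - t.countP (v ≤ ·) : ℤ)) l = 0 := by
    push_cast
    rw [← Pi.sub_def, abelSum_sub, abelSum_countP (oddPoly_zero n c) hl hl0 hs hsl,
      abelSum_countP (oddPoly_zero n c) hl hl0 ht htl, sum_map_oddPoly,
      sum_map_oddPoly, ← Finset.sum_sub_distrib]
    exact Finset.sum_eq_zero fun m hm => by rw [h m (Finset.mem_range.1 hm), sub_self]
  exact hpos.ne' hzero

theorem card_filter_le_lt_of_antitone {ι α : Type*} [Fintype ι] [LinearOrder ι] [LinearOrder α]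
    {x y : ι → α} (hx : Antitone x) (hy : Antitone y) {i : ι} (h : y i < x i) :
    (Finset.univ.filter fun j => x i ≤ y j).card <
      (Finset.univ.filter fun j => x i ≤ x j).card := by
  refine Finset.card_lt_card
    ((Finset.ssubset_iff_of_subset fun j hj => ?_).2 ⟨i, by simp, by simpa using h⟩)
  simp only [Finset.mem_filter, Finset.mem_univ, true_and] at hj ⊢
  exact hx (le_of_not_ge fun hij => (hy hij).trans_lt h |>.not_ge hj)

theorem le_of_sum_pow_eq {n : ℕ} {x y : Fin n → ℝ} (hx : Antitone x) (hx0 : 0 ≤ x)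
    (hy : Antitone y) (hy0 : 0 ≤ y) (h : ∀ m < n, ∑ j, x j ^ (2 * m + 3) = ∑ j, y j ^ (2 * m + 3)) :
    x ≤ y := by
  intro i
  by_contra! hlt
  have hcount := countP_le_eq_of_sum_map_pow_eq (s := Finset.univ.val.map x)
    (t := Finset.univ.val.map y) (n := n) (by simpa using fun j => hx0 j)
    (by simpa using fun j => hy0 j) (by simp) (by simp)
    (fun m hm => by
      simpa only [Multiset.map_map, Function.comp_def, Finset.sum_map_val] using h m hm)
    (u := x i) (by simp) ((hy0 i).trans_lt hlt)
  rw [Multiset.countP_map, Multiset.countP_map] at hcount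
  exact (card_filter_le_lt_of_antitone hx hy hlt).ne' hcount

theorem eq_of_sum_pow_eq {n : ℕ} {x y : Fin n → ℝ} (hx : Antitone x) (hx0 : 0 ≤ x)
    (hy : Antitone y) (hy0 : 0 ≤ y) (h : ∀ m < n, ∑ j, x j ^ (2 * m + 3) = ∑ j, y j ^ (2 * m + 3)) :
    x = y :=
  le_antisymm (le_of_sum_pow_eq hx hx0 hy hy0 h)
    (le_of_sum_pow_eq hy hy0 hx hx0 fun m hm => (h m hm).symm)

def antitoneCone (n : ℕ) : Set (Fin n → ℝ) := {β | Antitone β ∧ 0 ≤ β}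

variable {n : ℕ}

theorem isClosed_antitoneCone : IsClosed (antitoneCone n) :=
  isClosed_antitone.inter isClosed_Ici

theorem simplexS_subset_antitoneCone : simplexS n ⊆ antitoneCone n := by
  rintro β ⟨N, -, hpos, hstrict, hzero⟩
  have hnonneg : ∀ i, 0 ≤ β i := fun i =>
    (lt_or_ge (i : ℕ) N).elim (fun h => (hpos i h).le) fun h => (hzero i h).ge
  refine ⟨fun i j hij => ?_, hnonneg⟩
  rcases lt_or_ge (j : ℕ) N with hj | hj
  · rcases hij.eq_or_lt with rfl | hij
    · exact le_rfl
    · exact (hstrict i j hij hj).le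
  · rw [hzero j hj]
    exact hnonneg i

theorem continuous_PhiMap : Continuous (PhiMap n) := by
  unfold PhiMap
  fun_prop

theorem injOn_PhiMap_antitoneCone : Set.InjOn (PhiMap n) (antitoneCone n) := by
  rintro x ⟨hx, hx0⟩ y ⟨hy, hy0⟩ hxy
  refine eq_of_sum_pow_eq hx hx0 hy hy0 fun m hm => mul_left_cancel₀ ?_ (congrFun hxy ⟨m, hm⟩)
  exact div_ne_zero (mul_ne_zero (pow_ne_zero _ (by norm_num)) (by positivity)) (by positivity)

theorem isBounded_antitoneCone_inter_preimage_PhiMap {K : Set (Fin n → ℝ)}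
    (hK : Bornology.IsBounded K) : Bornology.IsBounded (antitoneCone n ∩ PhiMap n ⁻¹' K) := by
  obtain ⟨M, hM⟩ := hK.exists_norm_le
  refine isBounded_iff_forall_norm_le.2 ⟨max 1 (3 / 8 * M), fun β ⟨⟨_, hβ0⟩, hβK⟩ => ?_⟩
  refine (pi_norm_le_iff_of_nonneg (by positivity)).2 fun j => ?_
  have hcube : ∑ i, β i ^ 3 ≤ 3 / 8 * M := by
    have h0 := (norm_le_pi_norm (PhiMap n β) ⟨0, j.pos⟩).trans (hM _ hβK)
    simp only [PhiMap, Real.norm_eq_abs] at h0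
    norm_num at h0
    linarith [le_abs_self (∑ i, β i ^ 3)]
  have hj : β j ^ 3 ≤ ∑ i, β i ^ 3 :=
    Finset.single_le_sum (fun i _ => pow_nonneg (hβ0 i) 3) (Finset.mem_univ j)
  rw [Real.norm_of_nonneg (hβ0 j)]
  rcases le_or_gt (β j) 1 with h1 | h1
  · exact h1.trans (le_max_left _ _)
  · exact ((le_self_pow₀ h1.le (by norm_num)).trans (hj.trans hcube)).trans (le_max_right _ _)

theorem isProperMap_domRestrict_PhiMap :
    IsProperMap ((antitoneCone n).domRestrict (PhiMap n)) := by
  refine isProperMap_iff_isCompact_preimage.2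
    ⟨continuous_PhiMap.comp continuous_subtype_val, fun K hK => ?_⟩
  rw [Subtype.isCompact_iff]
  refine (Subtype.image_preimage_coe (antitoneCone n) (PhiMap n ⁻¹' K)).symm ▸ ?_
  exact Metric.isCompact_of_isClosed_isBounded
    (isClosed_antitoneCone.inter (hK.isClosed.preimage continuous_PhiMap))
    (isBounded_antitoneCone_inter_preimage_PhiMap hK.isBounded)

end OddPowerSum

open OddPowerSum Topology

theorem stmt_3_general (n : ℕ) :
    IsHomeomorph (fun β : simplexS n =>
      (⟨PhiMap n β.1, Set.mem_image_of_mem (PhiMap n) β.2⟩ :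
        PhiMap n '' simplexS n)) := by
  have hcone : IsClosedEmbedding ((antitoneCone n).domRestrict (PhiMap n)) :=
    .of_continuous_injective_isClosedMap isProperMap_domRestrict_PhiMap.continuous
      injOn_PhiMap_antitoneCone.injective isProperMap_domRestrict_PhiMap.isClosedMap
  rw [isHomeomorph_iff_isEmbedding_surjective]
  refine ⟨(hcone.isEmbedding.comp (IsEmbedding.inclusion simplexS_subset_antitoneCone)).codRestrict
    _ _, ?_⟩
  rintro ⟨_, β, hβ, rfl⟩
  exact ⟨⟨β, hβ⟩, rfl⟩

/-- **The moment map is a homeomorphism onto its image.**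
For `n ≥ 1`, the map `Φ` restricted to the half-open simplex `S` is a homeomorphism
from `S` (subspace topology) onto its image `Φ(S)` (subspace topology). -/
theorem stmt_3 (n : ℕ) (hn : 1 ≤ n) :
    IsHomeomorph (fun β : simplexS n =>
      (⟨PhiMap n β.1, Set.mem_image_of_mem (PhiMap n) β.2⟩ :
        PhiMap n '' simplexS n)) :=
  stmt_3_general n
end

section
/- Fix an integer n ≥ 1 and real numbers β_1 > β_2 > ⋯ > β_n > 0. Then there is a unique vector (C_1, …, C_n) ∈ ℝ^n satisfying the linear system Σ_{j=1}^{n} C_j (−1)^{j−1} 2^{2j+1} β_m^{2j} = (−1)^n 2^{2n+3} β_m^{2n+2} for every m = 1, …, n, and it is given explicitly by C_j = −2^{2n+2−2j} σ_{n−j+1}(β_1², …, β_n²) for j = 1, …, n, where σ_k denotes the k-th elementary symmetric polynomial in n variables. In particular, C_j < 0 for every j. -/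
/-!
With `y_m = -4 β_m²` the `m`-th equation is `8 β_m²` times `∑_j C_j y_m^j = y_m^n`. So the
system says that `y^n - ∑_j C_j y^j`, a monic polynomial of degree `n`, vanishes at the `n`
distinct points `y_m`, i.e. equals `∏_m (y - y_m) = ∏_m (y + 4 β_m²)`. Vieta's formulas read off
`C_j = -4^{n-j} σ_{n-j}(β²)`, and uniqueness is the invertibility of the Vandermonde matrix.
-/

open Polynomial Finset

lemma sum_neg_coeff_prod_X_sub_C_mul_pow {R : Type*} [CommRing R] [Nontrivial R] {n : ℕ}
    (y : Fin n → R) (m : Fin n) :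
    ∑ j : Fin n, -(∏ i, (X - C (y i))).coeff j * y m ^ (j : ℕ) = y m ^ n := by
  set P : R[X] := ∏ i, (X - C (y i))
  have hmonic : P.Monic := monic_prod_of_monic _ _ fun i _ => monic_X_sub_C (y i)
  have hdeg : P.natDegree = n := by simp [P]
  have hroot : P.eval (y m) = 0 := by
    rw [eval_prod]
    exact prod_eq_zero (mem_univ m) (by simp)
  rw [eval_eq_sum_range, hdeg, sum_range_succ, ← hdeg, hmonic.coeff_natDegree, hdeg, one_mul,
    ← Fin.sum_univ_eq_sum_range (fun j => P.coeff j * y m ^ j)] at hroot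
  simp only [neg_mul, sum_neg_distrib]
  linear_combination -hroot

lemma eq_neg_coeff_prod_X_sub_C_of_sum_mul_pow_eq {R : Type*} [CommRing R] [IsDomain R] {n : ℕ}
    {y : Fin n → R} (hy : Function.Injective y) {c : Fin n → R}
    (hc : ∀ m, ∑ j, c j * y m ^ (j : ℕ) = y m ^ n) :
    c = fun j => -(∏ i, (X - C (y i))).coeff j := by
  refine sub_eq_zero.1 (Matrix.eq_zero_of_forall_index_sum_mul_pow_eq_zero hy fun m => ?_)
  simp only [Pi.sub_apply, sub_mul, sum_sub_distrib, hc, sum_neg_coeff_prod_X_sub_C_mul_pow,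
    sub_self]

lemma sum_powersetCard_prod_const_mul {ι R : Type*} [CommSemiring R] (s : Finset ι) (k : ℕ)
    (a : R) (f : ι → R) :
    ∑ t ∈ s.powersetCard k, ∏ i ∈ t, a * f i = a ^ k * ∑ t ∈ s.powersetCard k, ∏ i ∈ t, f i := by
  rw [mul_sum]
  refine sum_congr rfl fun t ht => ?_
  rw [prod_mul_distrib, prod_const, (mem_powersetCard.1 ht).2]

lemma sum_powersetCard_prod_pos {ι R : Type*} [CommSemiring R] [PartialOrder R]
    [IsStrictOrderedRing R] {s : Finset ι} {k : ℕ} (hk : k ≤ #s) {f : ι → R}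
    (hf : ∀ i ∈ s, 0 < f i) : 0 < ∑ t ∈ s.powersetCard k, ∏ i ∈ t, f i :=
  sum_pos (fun _ ht => prod_pos fun i hi => hf i ((mem_powersetCard.1 ht).1 hi))
    (powersetCard_nonempty.2 hk)

lemma neg_one_pow_mul_two_pow_mul_pow {R : Type*} [CommRing R] (k : ℕ) (b : R) :
    (-1) ^ k * 2 ^ (2 * k + 3) * b ^ (2 * k + 2) = 8 * b ^ 2 * (-(4 * b ^ 2)) ^ k := by
  rw [neg_pow (4 * b ^ 2), mul_pow, show (4 : R) = 2 ^ 2 by norm_num, ← pow_mul, ← pow_mul]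
  ring

lemma sum_mul_neg_one_pow_mul_two_pow_mul_pow {R : Type*} [CommRing R] {n : ℕ} (c : Fin n → R)
    (b : R) :
    ∑ j, c j * (-1) ^ (j : ℕ) * 2 ^ (2 * (j : ℕ) + 3) * b ^ (2 * (j : ℕ) + 2)
      = 8 * b ^ 2 * ∑ j, c j * (-(4 * b ^ 2)) ^ (j : ℕ) := by
  rw [mul_sum]
  exact sum_congr rfl fun j _ => by linear_combination c j * neg_one_pow_mul_two_pow_mul_pow j b

theorem stmt_6_general (n : ℕ) (β : Fin n → ℝ)
    (hpos : ∀ i, 0 < β i) (hanti : StrictAnti β) :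
    let Cexp : Fin n → ℝ := fun j =>
      -(2 : ℝ) ^ (2 * n - 2 * (j : ℕ)) *
        ∑ t ∈ Finset.powersetCard (n - (j : ℕ)) Finset.univ, ∏ i ∈ t, (β i) ^ 2
    (∀ m : Fin n,
      ∑ j, Cexp j * (-1 : ℝ) ^ (j : ℕ) * 2 ^ (2 * (j : ℕ) + 3) * β m ^ (2 * (j : ℕ) + 2)
        = (-1 : ℝ) ^ n * 2 ^ (2 * n + 3) * β m ^ (2 * n + 2)) ∧
    (∀ C : Fin n → ℝ,
      (∀ m : Fin n,
        ∑ j, C j * (-1 : ℝ) ^ (j : ℕ) * 2 ^ (2 * (j : ℕ) + 3) * β m ^ (2 * (j : ℕ) + 2)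
          = (-1 : ℝ) ^ n * 2 ^ (2 * n + 3) * β m ^ (2 * n + 2)) → C = Cexp) ∧
    (∀ j, Cexp j < 0) := by
  intro Cexp
  set y : Fin n → ℝ := fun i => -(4 * β i ^ 2)
  have hy : Function.Injective y := fun a b hab =>
    hanti.injective <|
      (pow_left_inj₀ (hpos a).le (hpos b).le two_ne_zero).1 (by simpa [y] using hab)
  have hCexp : Cexp = fun j => -(∏ i, (X - C (y i))).coeff j := by
    funext j
    simp only [Cexp, y, map_neg, sub_neg_eq_add]
    rw [prod_X_add_C_coeff _ _ (by simp [j.isLt.le]), card_univ, Fintype.card_fin,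
      sum_powersetCard_prod_const_mul, show 2 * n - 2 * (j : ℕ) = 2 * (n - j) by omega, pow_mul]
    norm_num
  have hsystem : ∀ (c : Fin n → ℝ) (m : Fin n),
      (∑ j, c j * (-1 : ℝ) ^ (j : ℕ) * 2 ^ (2 * (j : ℕ) + 3) * β m ^ (2 * (j : ℕ) + 2)
        = (-1 : ℝ) ^ n * 2 ^ (2 * n + 3) * β m ^ (2 * n + 2)) ↔
      ∑ j, c j * y m ^ (j : ℕ) = y m ^ n := by
    intro c m
    have hb : (8 : ℝ) * β m ^ 2 ≠ 0 := by positivity [(hpos m).ne']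
    rw [sum_mul_neg_one_pow_mul_two_pow_mul_pow, neg_one_pow_mul_two_pow_mul_pow,
      mul_right_inj' hb]
  refine ⟨fun m => (hsystem Cexp m).2 ?_, fun c hc => ?_, fun j => ?_⟩
  · rw [hCexp]; exact sum_neg_coeff_prod_X_sub_C_mul_pow y m
  · rw [hCexp]
    exact eq_neg_coeff_prod_X_sub_C_of_sum_mul_pow_eq hy fun m => (hsystem c m).1 (hc m)
  · have hσ := sum_powersetCard_prod_pos (s := univ) (k := n - j) (by simp)
      fun i _ => pow_pos (hpos i) 2
    simp only [Cexp, neg_mul, Left.neg_neg_iff]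
    exact mul_pos (by positivity) hσ

/-- **The Lagrange-multiplier linear system and its explicit solution.**
Fix `n ≥ 1` and `β_1 > ⋯ > β_n > 0`.  The linear system
`∑_{j=1}^n C_j (-1)^{j-1} 2^{2j+1} β_m^{2j} = (-1)^n 2^{2n+3} β_m^{2n+2}` (`m = 1, …, n`)
has the unique solution `C_j = -2^{2n+2-2j} σ_{n-j+1}(β_1², …, β_n²)`, where `σ_k` is the
`k`-th elementary symmetric polynomial; in particular each `C_j < 0`.
(Here the index `j : Fin n` corresponds to the mathematical index `j + 1`, so the sign is
`(-1)^j`, the power of `2` in the system is `2^{2j+3}`, the exponent of `β_m` is `2j+2`,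
and the explicit solution reads `C_j = -2^{2n-2j} σ_{n-j}(β²)`.) -/
theorem stmt_6 (n : ℕ) (hn : 1 ≤ n) (β : Fin n → ℝ)
    (hpos : ∀ i, 0 < β i) (hanti : StrictAnti β) :
    let Cexp : Fin n → ℝ := fun j =>
      -(2 : ℝ) ^ (2 * n - 2 * (j : ℕ)) *
        ∑ t ∈ Finset.powersetCard (n - (j : ℕ)) Finset.univ, ∏ i ∈ t, (β i) ^ 2
    (∀ m : Fin n,
      ∑ j, Cexp j * (-1 : ℝ) ^ (j : ℕ) * 2 ^ (2 * (j : ℕ) + 3) * β m ^ (2 * (j : ℕ) + 2)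
        = (-1 : ℝ) ^ n * 2 ^ (2 * n + 3) * β m ^ (2 * n + 2)) ∧
    (∀ C : Fin n → ℝ,
      (∀ m : Fin n,
        ∑ j, C j * (-1 : ℝ) ^ (j : ℕ) * 2 ^ (2 * (j : ℕ) + 3) * β m ^ (2 * (j : ℕ) + 2)
          = (-1 : ℝ) ^ n * 2 ^ (2 * n + 3) * β m ^ (2 * n + 2)) → C = Cexp) ∧
    (∀ j, Cexp j < 0) :=
  stmt_6_general n β hpos hanti
end

section
/- Let ℓ ≥ 1, let 0 < s_1 < s_2 < ⋯ < s_ℓ be real numbers, and let 1 ≤ k_1 < k_2 < ⋯ < k_ℓ be integers. Then the ℓ × ℓ matrix with (i,j) entry (2k_j + 1) s_i^{2k_j} has strictly positive determinant. -/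
/-!
Expand the determinant along its last row, with the last point replaced by a variable `t`: this
gives a polynomial `P(t) = ∑ⱼ cⱼ t^{kⱼ}` with at most `n + 1` monomials, whose leading coefficient
is the `n × n` determinant of the same kind (positive by induction), and which vanishes at the
first `n` points. By Descartes' rule of signs `P` has at most `n` positive roots, so it has no
root at or beyond the last point, where it is therefore positive.

The theorem is the case of exponents `2kⱼ`, after pulling the factor `2kⱼ + 1` out of each column.
-/

open Finset Matrix Polynomial

namespace Polynomial

theorem signVariations_lt_card_support {R : Type*} [Semiring R] [LinearOrder R] {P : R[X]}
    (hP : P ≠ 0) : P.signVariations < #P.support := by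
  induction hn : #P.support using Nat.strong_induction_on generalizing P with
  | _ n ih =>
  by_cases hE : P.eraseLead = 0
  · have hmon : P = monomial P.natDegree P.leadingCoeff := by
      simpa [hE] using (eraseLead_add_monomial_natDegree_leadingCoeff P).symm
    rw [hmon, signVariations_monomial, ← hn]
    exact card_pos.2 (nonempty_support_iff.2 hP)
  · calc P.signVariations ≤ P.eraseLead.signVariations + 1 := signVariations_le_eraseLead_succ P
      _ < #P.eraseLead.support + 1 := by
        gcongr
        exact ih _ (hn ▸ eraseLead_support_card_lt hP) hE rfl
      _ = n := hn ▸ card_support_eraseLead_add_one hP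

theorem card_lt_card_support_of_pos_roots {P : ℝ[X]} (hP : P ≠ 0) {S : Finset ℝ}
    (hS : ∀ x ∈ S, 0 < x ∧ P.IsRoot x) : #S < #P.support := by
  have hSroots : S.val ≤ P.roots :=
    (Multiset.le_iff_subset S.nodup).2 fun x hx => (mem_roots hP).2 (hS x hx).2
  calc #S = S.val.countP (0 < ·) := (Multiset.countP_eq_card.2 fun x hx => (hS x hx).1).symm
    _ ≤ P.roots.countP (0 < ·) := Multiset.countP_le_of_le _ hSroots
    _ ≤ P.signVariations := roots_countP_pos_le_signVariations P
    _ < #P.support := signVariations_lt_card_support hP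

theorem card_support_sum_C_mul_X_pow_le {R : Type*} [Semiring R] {m : ℕ} (c : Fin m → R)
    (k : Fin m → ℕ) : #(∑ j, C (c j) * X ^ k j).support ≤ m := by
  calc #(∑ j, C (c j) * X ^ k j).support ≤ #(univ.image k) := by
        refine card_le_card fun e he => ?_
        rw [mem_support_iff, finsetSum_coeff] at he
        obtain ⟨j, -, hj⟩ := exists_ne_zero_of_sum_ne_zero he
        rw [coeff_C_mul_X_pow] at hj
        exact mem_image.2 ⟨j, mem_univ j, (ite_ne_right_iff.1 hj).1.symm⟩
    _ ≤ m := card_image_le.trans (card_fin m).le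

theorem coeff_sum_C_mul_X_pow_of_injective {R : Type*} [Semiring R] {m : ℕ} (c : Fin m → R)
    {k : Fin m → ℕ} (hk : Function.Injective k) (i : Fin m) :
    (∑ j, C (c j) * X ^ k j).coeff (k i) = c i := by
  rw [finsetSum_coeff, sum_eq_single i (fun j _ hj => ?_) (by simp)]
  · simp
  · rw [coeff_C_mul_X_pow, if_neg fun h => hj (hk h).symm]

theorem leadingCoeff_sum_C_mul_X_pow {R : Type*} [Semiring R] {n : ℕ} (c : Fin (n + 1) → R)
    (k : Fin (n + 1) → ℕ) (hk : StrictMono k) (hc : c (Fin.last n) ≠ 0) :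
    (∑ j, C (c j) * X ^ k j).leadingCoeff = c (Fin.last n) := by
  have hcoeff := coeff_sum_C_mul_X_pow_of_injective c hk.injective (Fin.last n)
  have hdeg : (∑ j, C (c j) * X ^ k j).natDegree = k (Fin.last n) :=
    le_antisymm
      (natDegree_sum_le_of_forall_le _ _ fun j _ =>
        (natDegree_C_mul_X_pow_le _ _).trans (hk.monotone (Fin.le_last j)))
      (le_natDegree_of_ne_zero (hcoeff ▸ hc))
  rw [leadingCoeff, hdeg, hcoeff]

end Polynomial

theorem Matrix.det_of_pow_pos {n : ℕ} {x : Fin n → ℝ} (hx : StrictMono x) (hx0 : ∀ i, 0 < x i)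
    {k : Fin n → ℕ} (hk : StrictMono k) : 0 < det (of fun i j => x i ^ k j) := by
  induction n with
  | zero => simp
  | succ n ih =>
  set A : Matrix (Fin (n + 1)) (Fin (n + 1)) ℝ := of fun i j => x i ^ k j
  set c : Fin (n + 1) → ℝ := fun j =>
    (-1) ^ (n + j : ℕ) * det (A.submatrix (Fin.last n).succAbove j.succAbove) with hc
  set P : ℝ[X] := ∑ j, C (c j) * X ^ k j
  have hP_eval (t : ℝ) : P.eval t = det (A.updateRow (Fin.last n) fun j => t ^ k j) := by
    rw [det_succ_row _ (Fin.last n)]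
    simp only [P, eval_finsetSum, eval_mul, eval_C, eval_pow, eval_X, hc,
      submatrix_updateRow_succAbove, updateRow_self, Fin.val_last]
    exact sum_congr rfl fun j _ => by ring
  have hc_last : 0 < c (Fin.last n) := by
    simp only [hc, Fin.val_last, ← two_mul, pow_mul, neg_one_sq, one_pow, one_mul,
      Fin.succAbove_last]
    exact ih (hx.comp Fin.strictMono_castSucc) (fun i => hx0 _) (hk.comp Fin.strictMono_castSucc)
  have hlead : P.leadingCoeff = c (Fin.last n) := leadingCoeff_sum_C_mul_X_pow c k hk hc_last.ne'
  have hP : P ≠ 0 := fun h => hc_last.ne' (by rw [← hlead, h, leadingCoeff_zero])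
  have hroot (i : Fin n) : P.IsRoot (x i.castSucc) := by
    rw [IsRoot, hP_eval]
    exact det_updateRow_eq_zero (Fin.castSucc_lt_last i).ne
  have hroots_lt (y : ℝ) (hy : P.IsRoot y) : y < x (Fin.last n) := by
    by_contra! hle
    have hy0 : 0 < y := (hx0 _).trans_le hle
    have hyS : y ∉ univ.image (x ∘ Fin.castSucc) := by
      simp only [mem_image, mem_univ, true_and, Function.comp_apply, not_exists]
      exact fun i hi => (hx (Fin.castSucc_lt_last i)).not_ge (hi ▸ hle)
    have := card_lt_card_support_of_pos_roots hP
      (S := insert y (univ.image (x ∘ Fin.castSucc))) (by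
        simp only [mem_insert, mem_image, mem_univ, true_and, Function.comp_apply]
        rintro _ (rfl | ⟨i, rfl⟩)
        exacts [⟨hy0, hy⟩, ⟨hx0 _, hroot i⟩])
    rw [card_insert_of_notMem hyS, card_image_of_injective _
      (hx.injective.comp (Fin.castSucc_injective n)), card_univ, Fintype.card_fin] at this
    exact this.not_ge (card_support_sum_C_mul_X_pow_le c k)
  have := zero_lt_eval_of_roots_lt_of_leadingCoeff_nonneg hroots_lt (hlead ▸ hc_last.le)
  rwa [hP_eval, show (fun j => x (Fin.last n) ^ k j) = A (Fin.last n) from rfl,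
    updateRow_eq_self] at this

theorem stmt_8_general (ℓ : ℕ) (s : Fin ℓ → ℝ) (hs : StrictMono s)
    (hpos : ∀ i, 0 < s i) (k : Fin ℓ → ℕ) (hk : StrictMono k) :
    0 < Matrix.det
      (Matrix.of fun i j : Fin ℓ => ((2 * k j + 1 : ℕ) : ℝ) * s i ^ (2 * k j)) := by
  have hcolumns := det_mul_row (fun j => ((2 * k j + 1 : ℕ) : ℝ)) (of fun i j => s i ^ (2 * k j))
  simp only [of_apply] at hcolumns
  rw [hcolumns]
  exact mul_pos (prod_pos fun j _ => by positivity)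
    (det_of_pow_pos hs hpos fun a b hab => Nat.mul_lt_mul_of_pos_left (hk hab) two_pos)

/-- **Strict total positivity of the power kernel.**
Let `ℓ ≥ 1`, let `0 < s_1 < ⋯ < s_ℓ` and let `1 ≤ k_1 < ⋯ < k_ℓ` be integers.  Then the
`ℓ × ℓ` matrix with `(i, j)` entry `(2k_j + 1) s_i^{2k_j}` has strictly positive
determinant. -/
theorem stmt_8 (ℓ : ℕ) (hℓ : 1 ≤ ℓ) (s : Fin ℓ → ℝ) (hs : StrictMono s)
    (hpos : ∀ i, 0 < s i) (k : Fin ℓ → ℕ) (hk : StrictMono k) (hk1 : ∀ j, 1 ≤ k j) :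
    0 < Matrix.det
      (Matrix.of fun i j : Fin ℓ => ((2 * k j + 1 : ℕ) : ℝ) * s i ^ (2 * k j)) :=
  stmt_8_general ℓ s hs hpos k hk
end

section
/- Fix an integer N ≥ 2 and real numbers e_1, e_2. There exist an integer M with 0 ≤ M ≤ N and distinct positive reals β_1 > ⋯ > β_M > 0 such that (8/3) Σ_{m=1}^{M} β_m^3 = e_1 and −(32/5) Σ_{m=1}^{M} β_m^5 = e_2 if and only if either (e_1, e_2) = (0, 0), or e_1 > 0 and −(32/5)(3/8)^{5/3} e_1^{5/3} ≤ e_2 < −N^{−2/3}(32/5)(3/8)^{5/3} e_1^{5/3}. -/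
/-!
Substituting `x_m = β_m ^ 3` turns the pair into `(∑ x_m, ∑ x_m ^ p)` with `p = 5 / 3`, up to the
factors `8 / 3` and `-32 / 5`. For `p > 1`, superadditivity of `x ↦ x ^ p` gives
`∑ x_m ^ p ≤ (∑ x_m) ^ p`, and Jensen's inequality gives `(∑ x_m) ^ p ≤ M ^ (p - 1) ∑ x_m ^ p`,
which is strict against `N ^ (p - 1)` either because `M < N` or because `M = N ≥ 2` and the
`x_m` are distinct. Conversely, along the geometric profiles `x_m = λ ^ m`, `m < N`, the ratio
`∑ x_m ^ p / (∑ x_m) ^ p` runs continuously from `1` at `λ = 0` to `N ^ (1 - p)` at `λ = 1`, so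
every ratio strictly in between is attained and rescaling fixes `∑ x_m`; the ratio `1` itself is a
single soliton.
-/

open Finset Real

section PowerMeans

variable {ι : Type*} {s : Finset ι} {x : ι → ℝ} {p : ℝ}

theorem sum_rpow_le_rpow_sum (hp : 1 ≤ p) (hx : ∀ i ∈ s, 0 ≤ x i) :
    ∑ i ∈ s, x i ^ p ≤ (∑ i ∈ s, x i) ^ p := by
  classical
  induction s using Finset.induction_on with
  | empty => simp [zero_rpow (by linarith : p ≠ 0)]
  | insert a s ha ih =>
    rw [sum_insert ha, sum_insert ha]
    have hxs : ∀ i ∈ s, 0 ≤ x i := fun i hi => hx i (mem_insert_of_mem hi)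
    calc x a ^ p + ∑ i ∈ s, x i ^ p ≤ x a ^ p + (∑ i ∈ s, x i) ^ p := by gcongr; exact ih hxs
      _ ≤ _ := add_rpow_le_rpow_add (hx a (mem_insert_self a s)) (sum_nonneg hxs) hp

theorem rpow_sum_lt_card_rpow_mul_sum_rpow (hp : 1 < p) (hx : ∀ i ∈ s, 0 ≤ x i)
    (hne : ∃ i ∈ s, ∃ j ∈ s, x i ≠ x j) :
    (∑ i ∈ s, x i) ^ p < (#s : ℝ) ^ (p - 1) * ∑ i ∈ s, x i ^ p := by
  have hn : (0 : ℝ) < #s := by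
    obtain ⟨i, hi, -⟩ := hne
    exact_mod_cast card_pos.2 ⟨i, hi⟩
  have jensen := (strictConvexOn_rpow hp).map_sum_lt (fun _ _ => inv_pos.2 hn)
    (by simp [hn.ne']) hx hne
  simp only [smul_eq_mul, ← mul_sum] at jensen
  rw [mul_rpow (inv_nonneg.2 hn.le) (sum_nonneg hx), inv_rpow hn.le,
    inv_mul_lt_iff₀ (rpow_pos_of_pos hn p)] at jensen
  rwa [rpow_sub_one hn.ne', div_eq_mul_inv, mul_assoc]

end PowerMeans

theorem rpow_sum_lt_mul_sum_rpow_of_injective {ι : Type*} [Fintype ι] [Nonempty ι] {x : ι → ℝ}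
    {p : ℝ} {N : ℕ} (hp : 1 < p) (hN : 2 ≤ N) (hcard : Fintype.card ι ≤ N)
    (hx : Function.Injective x) (hpos : ∀ i, 0 < x i) :
    (∑ i, x i) ^ p < (N : ℝ) ^ (p - 1) * ∑ i, x i ^ p := by
  have hx0 : ∀ i ∈ univ, 0 ≤ x i := fun i _ => (hpos i).le
  rcases hcard.lt_or_eq with hlt | rfl
  · have hsum : 0 < ∑ i, x i ^ p := sum_pos (fun i _ => rpow_pos_of_pos (hpos i) p) univ_nonempty
    calc (∑ i, x i) ^ p ≤ (Fintype.card ι : ℝ) ^ (p - 1) * ∑ i, x i ^ p :=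
          rpow_sum_le_const_mul_sum_rpow_of_nonneg univ hp.le hx0
      _ < (N : ℝ) ^ (p - 1) * ∑ i, x i ^ p := by gcongr
  · obtain ⟨i, j, hij⟩ := Fintype.exists_pair_of_one_lt_card hN
    exact rpow_sum_lt_card_rpow_mul_sum_rpow hp hx0 ⟨i, mem_univ i, j, mem_univ j, hx.ne hij⟩

theorem exists_sum_rpow_geom_eq_mul_rpow_sum_geom {N : ℕ} {p ρ : ℝ} (hN : 0 < N) (hp : 0 < p)
    (hρ₀ : (N : ℝ) ^ (1 - p) < ρ) (hρ₁ : ρ < 1) :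
    ∃ l : ℝ, 0 < l ∧ l < 1 ∧
      ∑ i : Fin N, (l ^ (i : ℕ)) ^ p = ρ * (∑ i : Fin N, l ^ (i : ℕ)) ^ p := by
  have : NeZero N := ⟨hN.ne'⟩
  set A : ℝ → ℝ := fun l => ∑ i : Fin N, l ^ (i : ℕ)
  have hA : ∀ l : ℝ, 0 ≤ l → 0 < A l ^ p := by
    intro l hl
    refine rpow_pos_of_pos (lt_of_lt_of_le one_pos ?_) p
    simpa using single_le_sum (f := fun i : Fin N => l ^ (i : ℕ)) (fun i _ => by positivity)
      (mem_univ (0 : Fin N))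
  set g : ℝ → ℝ := fun l => (∑ i : Fin N, (l ^ (i : ℕ)) ^ p) / A l ^ p
  have hg : ContinuousOn g (Set.Icc 0 1) := by
    refine ContinuousOn.div ?_ ?_ fun l hl => (hA l hl.1).ne'
    · exact continuousOn_finsetSum _ fun i _ =>
        ((continuous_pow _).continuousOn).rpow_const fun _ _ => Or.inr hp.le
    · exact (continuous_finsetSum _ fun i _ => continuous_pow _).continuousOn.rpow_const
        fun _ _ => Or.inr hp.le
  have hg0 : g 0 = 1 := by
    obtain ⟨n, rfl⟩ := Nat.exists_eq_succ_of_ne_zero hN.ne'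
    simp [g, A, Fin.sum_univ_succ, zero_rpow hp.ne']
  have hg1 : g 1 = (N : ℝ) ^ (1 - p) := by
    simp [g, A, rpow_sub (Nat.cast_pos.2 hN)]
  obtain ⟨l, ⟨hl0, hl1⟩, hgl⟩ : ∃ l ∈ Set.Icc (0 : ℝ) 1, g l = ρ :=
    intermediate_value_Icc' zero_le_one hg ⟨hg1 ▸ hρ₀.le, hg0 ▸ hρ₁.le⟩
  refine ⟨l, hl0.lt_of_ne ?_, hl1.lt_of_ne ?_, (div_eq_iff (hA l hl0).ne').1 hgl⟩
  · rintro rfl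
    exact hρ₁.ne (hg0 ▸ hgl).symm
  · rintro rfl
    exact hρ₀.ne (hg1 ▸ hgl)

theorem exists_strictAnti_sum_eq_sum_rpow_eq {N : ℕ} {p s t : ℝ} (hN : 0 < N) (hp : 0 < p)
    (hs : 0 < s) (hlow : (N : ℝ) ^ (1 - p) * s ^ p < t) (hup : t < s ^ p) :
    ∃ x : Fin N → ℝ, StrictAnti x ∧ (∀ i, 0 < x i) ∧ ∑ i, x i = s ∧ ∑ i, x i ^ p = t := by
  have hsp : 0 < s ^ p := rpow_pos_of_pos hs p
  obtain ⟨l, hl0, hl1, hl⟩ := exists_sum_rpow_geom_eq_mul_rpow_sum_geom (ρ := t / s ^ p) hN hp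
    ((lt_div_iff₀ hsp).2 hlow) ((div_lt_one hsp).2 hup)
  set A := ∑ i : Fin N, l ^ (i : ℕ)
  have hA : 0 < A := sum_pos (fun i _ => pow_pos hl0 _) ⟨⟨0, hN⟩, mem_univ _⟩
  refine ⟨fun i => s / A * l ^ (i : ℕ), fun i j hij => ?_, fun i => by positivity, ?_, ?_⟩
  · exact mul_lt_mul_of_pos_left (pow_lt_pow_right_of_lt_one₀ hl0 hl1 hij) (by positivity)
  · rw [← mul_sum, div_mul_cancel₀ _ hA.ne']
  · simp_rw [mul_rpow (div_pos hs hA).le (pow_nonneg hl0.le _), ← mul_sum, hl,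
      div_rpow hs.le hA.le]
    field_simp

def IsPowerSumPair (N : ℕ) (p s t : ℝ) : Prop :=
  ∃ M ≤ N, ∃ x : Fin M → ℝ, StrictAnti x ∧ (∀ i, 0 < x i) ∧ ∑ i, x i = s ∧ ∑ i, x i ^ p = t

theorem isPowerSumPair_iff {N : ℕ} {p s t : ℝ} (hN : 2 ≤ N) (hp : 1 < p) :
    IsPowerSumPair N p s t ↔
      s = 0 ∧ t = 0 ∨ 0 < s ∧ t ≤ s ^ p ∧ (N : ℝ) ^ (1 - p) * s ^ p < t := by
  have hNpos : (0 : ℝ) < N := by positivity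
  constructor
  · rintro ⟨M, hMN, x, hx, hpos, rfl, rfl⟩
    rcases M.eq_zero_or_pos with rfl | hM
    · simp
    have : Nonempty (Fin M) := ⟨⟨0, hM⟩⟩
    have hlow := rpow_sum_lt_mul_sum_rpow_of_injective hp hN (by simpa using hMN) hx.injective hpos
    refine Or.inr ⟨sum_pos (fun i _ => hpos i) univ_nonempty,
      sum_rpow_le_rpow_sum hp.le fun i _ => (hpos i).le, ?_⟩
    rwa [← neg_sub, rpow_neg hNpos.le, inv_mul_lt_iff₀ (rpow_pos_of_pos hNpos _)]
  · rintro (⟨rfl, rfl⟩ | ⟨hs, hup, hlow⟩)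
    · exact ⟨0, N.zero_le, Fin.elim0, fun i => i.elim0, fun i => i.elim0, by simp, by simp⟩
    rcases hup.lt_or_eq with hup | rfl
    · obtain ⟨x, hx⟩ := exists_strictAnti_sum_eq_sum_rpow_eq (by omega) (by linarith) hs hlow hup
      exact ⟨N, le_rfl, x, hx⟩
    · exact ⟨1, by omega, fun _ => s, Subsingleton.strictAnti _, fun _ => hs, by simp, by simp⟩

theorem pow_rpow_div_natCast {x : ℝ} (hx : 0 ≤ x) {a : ℕ} (ha : a ≠ 0) (b : ℕ) :
    (x ^ a) ^ ((b : ℝ) / a) = x ^ b := by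
  rw [← rpow_natCast, ← rpow_mul hx, mul_div_cancel₀ _ (Nat.cast_ne_zero.2 ha), rpow_natCast]

theorem exists_sum_pow_eq_iff_isPowerSumPair {a b : ℕ} (ha : a ≠ 0) (N : ℕ) (s t : ℝ) :
    (∃ M ≤ N, ∃ β : Fin M → ℝ, StrictAnti β ∧ (∀ i, 0 < β i) ∧
      ∑ m, β m ^ a = s ∧ ∑ m, β m ^ b = t) ↔ IsPowerSumPair N ((b : ℝ) / a) s t := by
  constructor
  · rintro ⟨M, hMN, β, hβ, hpos, rfl, rfl⟩
    refine ⟨M, hMN, fun i => β i ^ a, fun i j hij => pow_lt_pow_left₀ (hβ hij) (hpos j).le ha,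
      fun i => pow_pos (hpos i) a, rfl, ?_⟩
    simp_rw [pow_rpow_div_natCast (hpos _).le ha]
  · rintro ⟨M, hMN, x, hx, hpos, rfl, rfl⟩
    refine ⟨M, hMN, fun i => x i ^ (a⁻¹ : ℝ),
      fun i j hij => rpow_lt_rpow (hpos j).le (hx hij) (by positivity),
      fun i => rpow_pos_of_pos (hpos i) _, ?_, ?_⟩
    · simp_rw [rpow_inv_natCast_pow (hpos _).le ha]
    · simp_rw [← rpow_natCast, ← rpow_mul (hpos _).le, inv_mul_eq_div]

/-- **Description of the set `𝓜²_N` of constraints attainable by multisolitons of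
degree at most `N`.**  For `N ≥ 2` and reals `e₁, e₂`: there exist `M ≤ N` and strictly
decreasing positive reals `β_1 > ⋯ > β_M > 0` with `(8/3) ∑ β_m³ = e₁` and
`-(32/5) ∑ β_m⁵ = e₂` if and only if `(e₁, e₂) = (0, 0)`, or `e₁ > 0` and
`-(32/5)(3/8)^{5/3} e₁^{5/3} ≤ e₂ < -N^{-2/3} (32/5)(3/8)^{5/3} e₁^{5/3}`. -/
theorem stmt_12 (N : ℕ) (hN : 2 ≤ N) (e₁ e₂ : ℝ) :
    (∃ M ≤ N, ∃ β : Fin M → ℝ, StrictAnti β ∧ (∀ i, 0 < β i) ∧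
      (8 / 3 : ℝ) * ∑ m, β m ^ 3 = e₁ ∧ -(32 / 5 : ℝ) * ∑ m, β m ^ 5 = e₂) ↔
    ((e₁ = 0 ∧ e₂ = 0) ∨
      (0 < e₁ ∧
        -(32 / 5 : ℝ) * (3 / 8 : ℝ) ^ ((5 : ℝ) / 3) * e₁ ^ ((5 : ℝ) / 3) ≤ e₂ ∧
        e₂ < -((N : ℝ) ^ (-(2 / 3) : ℝ)) * (32 / 5) * (3 / 8 : ℝ) ^ ((5 : ℝ) / 3) *
          e₁ ^ ((5 : ℝ) / 3))) := by
  have key := (exists_sum_pow_eq_iff_isPowerSumPair three_ne_zero N ((8 / 3 : ℝ)⁻¹ * e₁)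
    ((-(32 / 5) : ℝ)⁻¹ * e₂)).trans (isPowerSumPair_iff (p := (5 : ℕ) / (3 : ℕ)) hN (by norm_num))
  simp only [eq_inv_mul_iff_mul_eq₀ (by norm_num : (8 / 3 : ℝ) ≠ 0),
    eq_inv_mul_iff_mul_eq₀ (by norm_num : (-(32 / 5) : ℝ) ≠ 0)] at key
  rw [key]
  refine or_congr (by simp) ?_
  have hpos : 0 < (8 / 3 : ℝ)⁻¹ * e₁ ↔ 0 < e₁ := by norm_num
  rw [hpos]
  refine and_congr_right fun he₁ => ?_
  have hexp : ((5 : ℕ) : ℝ) / (3 : ℕ) = 5 / 3 := by norm_num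
  rw [hexp, show (1 : ℝ) - 5 / 3 = -(2 / 3) by norm_num, mul_rpow (by norm_num) he₁.le,
    show (8 / 3 : ℝ)⁻¹ = 3 / 8 by norm_num]
  constructor <;> rintro ⟨h₁, h₂⟩ <;> constructor <;> linarith
end

section
/- Let e_1, e_2 be real numbers. There exist an integer N ≥ 0 and distinct positive reals β_1 > ⋯ > β_N > 0 such that (8/3) Σ_{m=1}^{N} β_m^3 = e_1 and −(32/5) Σ_{m=1}^{N} β_m^5 = e_2 if and only if either (e_1, e_2) = (0, 0), or e_1 > 0 and −(32/5)(3/8)^{5/3} e_1^{5/3} ≤ e_2 < 0. -/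
/-!
Write `s₃ = ∑ β³` and `s₅ = ∑ β⁵`, so that `e₁ = (8/3) s₃` and `e₂ = -(32/5) s₅`. The bound on
`e₂` says `s₅ ≤ s₃ ^ (5/3)`, i.e. `s₅³ ≤ s₃⁵`. This holds for every nonnegative family, since
`∑ β⁵ ≤ (max β)² ∑ β³` and `(max β)³ ≤ ∑ β³`. Conversely, the ratio `s₅³ / s₃⁵` is invariant
under scaling `β ↦ c β`, so it suffices to attain every ratio `ρ ∈ (0, 1]`. A single soliton
gives `ρ = 1`; for `ρ < 1` the geometric families `tⁱ` (`i ≤ N`) have ratio `1` at `t = 0` and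
`1 / (N + 1)²` at `t = 1`, and the intermediate value theorem gives a suitable `t ∈ (0, 1)`.
-/

open Finset

theorem sum_pow_pow_le_sum_pow_pow {ι : Type*} (s : Finset ι) {f : ι → ℝ}
    (hf : ∀ i ∈ s, 0 ≤ f i) {p q : ℕ} (hp : p ≠ 0) (hpq : p ≤ q) :
    (∑ i ∈ s, f i ^ q) ^ p ≤ (∑ i ∈ s, f i ^ p) ^ q := by
  rcases s.eq_empty_or_nonempty with rfl | hs
  · simp [zero_pow hp, zero_pow (hp.bot_lt.trans_le hpq).ne']
  obtain ⟨j, hj, hmax⟩ := s.exists_max_image f hs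
  set A := ∑ i ∈ s, f i ^ p
  have hA : 0 ≤ A := sum_nonneg fun i hi => pow_nonneg (hf i hi) p
  have hjA : f j ^ p ≤ A := single_le_sum (fun i hi => pow_nonneg (hf i hi) p) hj
  have hsum : ∑ i ∈ s, f i ^ q ≤ f j ^ (q - p) * A := by
    rw [mul_sum]
    refine sum_le_sum fun i hi => ?_
    rw [← pow_sub_mul_pow (f i) hpq]
    have := hf i hi
    gcongr
    exact hmax i hi
  calc (∑ i ∈ s, f i ^ q) ^ p ≤ (f j ^ (q - p) * A) ^ p := by
        gcongr
        exact sum_nonneg fun i hi => pow_nonneg (hf i hi) q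
    _ = (f j ^ p) ^ (q - p) * A ^ p := by ring
    _ ≤ A ^ (q - p) * A ^ p := by have := hf j hj; gcongr
    _ = A ^ q := by rw [← pow_add, Nat.sub_add_cancel hpq]

theorem sum_fin_succ_pow_pow_pos {t : ℝ} (ht : 0 ≤ t) (N k : ℕ) :
    0 < ∑ i : Fin (N + 1), (t ^ (i : ℕ)) ^ k := by
  rw [Fin.sum_univ_succ]
  simp only [Fin.val_zero, pow_zero, one_pow]
  positivity

theorem exists_strictAnti_pos_sum_pow_eq {ρ : ℝ} (hρ0 : 0 < ρ) (hρ1 : ρ ≤ 1) :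
    ∃ N, ∃ β : Fin (N + 1) → ℝ, StrictAnti β ∧ (∀ i, 0 < β i) ∧
      (∑ i, β i ^ 5) ^ 3 = ρ * (∑ i, β i ^ 3) ^ 5 := by
  rcases hρ1.eq_or_lt with rfl | hρ1
  · exact ⟨0, fun _ => 1, Subsingleton.strictAnti (α := Fin 1) _, fun _ => one_pos, by simp⟩
  obtain ⟨N, hN⟩ := exists_nat_gt ρ⁻¹
  set g : ℝ → ℝ := fun t =>
    (∑ i : Fin (N + 1), (t ^ (i : ℕ)) ^ 5) ^ 3 / (∑ i : Fin (N + 1), (t ^ (i : ℕ)) ^ 3) ^ 5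
  have hg : ContinuousOn g (Set.Icc 0 1) :=
    ContinuousOn.div (by fun_prop) (by fun_prop) fun t ht =>
      (pow_pos (sum_fin_succ_pow_pow_pos ht.1 N 3) 5).ne'
  have hg0 : g 0 = 1 := by simp [g, Fin.sum_univ_succ]
  have hg1 : g 1 = 1 / (N + 1) ^ 2 := by
    simp only [g, one_pow, sum_const, card_univ, Fintype.card_fin, nsmul_eq_mul, mul_one]
    push_cast
    field_simp
  have hρ : ρ ∈ Set.Ioo (g 1) (g 0) := by
    rw [hg0, hg1]
    refine ⟨?_, hρ1⟩
    rw [inv_lt_iff_one_lt_mul₀ hρ0] at hN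
    rw [div_lt_iff₀ (by positivity)]
    nlinarith
  obtain ⟨t, ⟨ht0, ht1⟩, hgt⟩ := intermediate_value_Ioo' zero_le_one hg hρ
  refine ⟨N, fun i => t ^ (i : ℕ),
    (pow_right_strictAnti₀ ht0 ht1).comp_strictMono Fin.val_strictMono, fun i => pow_pos ht0 _, ?_⟩
  rw [← hgt, div_mul_cancel₀]
  exact (pow_pos (sum_fin_succ_pow_pow_pos ht0.le N 3) 5).ne'

theorem exists_pos_pow_mul_eq {A B s₃ s₅ : ℝ} (hA : 0 < A) (hB : 0 < B) (hs₃ : 0 < s₃)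
    (hs₅ : 0 < s₅) (h : B ^ 3 * s₃ ^ 5 = s₅ ^ 3 * A ^ 5) :
    ∃ c : ℝ, 0 < c ∧ c ^ 3 * A = s₃ ∧ c ^ 5 * B = s₅ := by
  -- `c = c⁶ / c⁵ = (s₃ / A)² / (s₅ / B)`
  refine ⟨s₃ ^ 2 * B / (A ^ 2 * s₅), by positivity, ?_, ?_⟩
  · field_simp
    linear_combination h
  · field_simp
    linear_combination (s₃ ^ 5 * B ^ 3 + s₅ ^ 3 * A ^ 5) * h

theorem exists_strictAnti_pos_sum_pow_iff (s₃ s₅ : ℝ) :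
    (∃ N, ∃ β : Fin N → ℝ, StrictAnti β ∧ (∀ i, 0 < β i) ∧
      ∑ i, β i ^ 3 = s₃ ∧ ∑ i, β i ^ 5 = s₅) ↔
    (s₃ = 0 ∧ s₅ = 0) ∨ (0 < s₃ ∧ 0 < s₅ ∧ s₅ ^ 3 ≤ s₃ ^ 5) := by
  constructor
  · rintro ⟨N, β, -, hβ, rfl, rfl⟩
    rcases N.eq_zero_or_pos with rfl | hN
    · simp
    have : Nonempty (Fin N) := ⟨⟨0, hN⟩⟩
    exact .inr ⟨sum_pos (fun i _ => pow_pos (hβ i) 3) univ_nonempty,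
      sum_pos (fun i _ => pow_pos (hβ i) 5) univ_nonempty,
      sum_pow_pow_le_sum_pow_pow _ (fun i _ => (hβ i).le) (by norm_num) (by norm_num)⟩
  rintro (⟨rfl, rfl⟩ | ⟨hs₃, hs₅, hle⟩)
  · exact ⟨0, Fin.elim0, Subsingleton.strictAnti _, fun i => i.elim0, by simp, by simp⟩
  obtain ⟨N, β, hanti, hβ, hratio⟩ := exists_strictAnti_pos_sum_pow_eq
    (ρ := s₅ ^ 3 / s₃ ^ 5) (by positivity) (div_le_one_of_le₀ hle (by positivity))
  have hA : 0 < ∑ i, β i ^ 3 := sum_pos (fun i _ => pow_pos (hβ i) 3) univ_nonempty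
  have hB : 0 < ∑ i, β i ^ 5 := sum_pos (fun i _ => pow_pos (hβ i) 5) univ_nonempty
  obtain ⟨c, hc, h₃, h₅⟩ := exists_pos_pow_mul_eq hA hB hs₃ hs₅ (by rw [hratio]; field_simp)
  refine ⟨N + 1, fun i => c * β i, hanti.const_mul hc, fun i => mul_pos hc (hβ i), ?_, ?_⟩
  · simp_rw [mul_pow, ← mul_sum]
    exact h₃
  · simp_rw [mul_pow, ← mul_sum]
    exact h₅

theorem le_rpow_div_iff_pow_le {a b : ℝ} (ha : 0 ≤ a) {m n : ℕ} (hn : Odd n) :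
    b ≤ a ^ ((m : ℝ) / n) ↔ b ^ n ≤ a ^ m := by
  have hn0 : (n : ℝ) ≠ 0 := by exact_mod_cast hn.pos.ne'
  rw [← hn.strictMono_pow.le_iff_le, ← Real.rpow_mul_natCast ha, div_mul_cancel₀ _ hn0,
    Real.rpow_natCast]

/-- **Description of the union `⋃_N 𝓜²_N` of constraints attainable by multisolitons.**
For reals `e₁, e₂`: there exist `N ≥ 0` and strictly decreasing positive reals
`β_1 > ⋯ > β_N > 0` with `(8/3) ∑ β_m³ = e₁` and `-(32/5) ∑ β_m⁵ = e₂` if and only if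
`(e₁, e₂) = (0, 0)`, or `e₁ > 0` and `-(32/5)(3/8)^{5/3} e₁^{5/3} ≤ e₂ < 0`. -/
theorem stmt_13 (e₁ e₂ : ℝ) :
    (∃ N : ℕ, ∃ β : Fin N → ℝ, StrictAnti β ∧ (∀ i, 0 < β i) ∧
      (8 / 3 : ℝ) * ∑ m, β m ^ 3 = e₁ ∧ -(32 / 5 : ℝ) * ∑ m, β m ^ 5 = e₂) ↔
    ((e₁ = 0 ∧ e₂ = 0) ∨
      (0 < e₁ ∧
        -(32 / 5 : ℝ) * (3 / 8 : ℝ) ^ ((5 : ℝ) / 3) * e₁ ^ ((5 : ℝ) / 3) ≤ e₂ ∧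
        e₂ < 0)) := by
  have h₃ (x : ℝ) : 8 / 3 * x = e₁ ↔ x = 3 / 8 * e₁ := by constructor <;> intro <;> linarith
  have h₅ (x : ℝ) : -(32 / 5) * x = e₂ ↔ x = -(5 / 32) * e₂ := by
    constructor <;> intro <;> linarith
  have hbound (he₁ : 0 < e₁) :
      -(32 / 5 : ℝ) * (3 / 8 : ℝ) ^ ((5 : ℝ) / 3) * e₁ ^ ((5 : ℝ) / 3) ≤ e₂ ↔
        (-(5 / 32) * e₂) ^ 3 ≤ (3 / 8 * e₁) ^ 5 := by
    rw [← le_rpow_div_iff_pow_le (by positivity) (by decide), Real.mul_rpow (by norm_num) he₁.le]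
    push_cast
    constructor <;> intro <;> linarith
  simp only [h₃, h₅]
  rw [exists_strictAnti_pos_sum_pow_iff]
  refine or_congr (by constructor <;> rintro ⟨_, _⟩ <;> constructor <;> linarith) ⟨?_, ?_⟩
  · rintro ⟨hs₃, hs₅, hle⟩
    have he₁ : 0 < e₁ := by linarith
    exact ⟨he₁, (hbound he₁).2 hle, by linarith⟩
  · rintro ⟨he₁, hle, he₂⟩
    exact ⟨by linarith, by linarith, (hbound he₁).1 hle⟩
end
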